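/- For every r with 0 ≤ r ≤ 1/√3 and every real θ, the state S₂(r,θ) = r(|↑↑0⟩ + |↓0↓⟩ + e^{iθ}|0↓↑⟩) + √(1/3 − r²)(|↓↓0⟩ + |↑0↑⟩ + |0↑↓⟩) is a unit vector whose three single-mode reduced density matrices all equal (1/3)·I₃. -/
import Mathlib


open Finset

/-- Reduced density matrix of mode A (trace out B and C). -/
noncomputable def rhoA (m : Fin 3 → Fin 3 → Fin 3 → ℂ) : Matrix (Fin 3) (Fin 3) ℂ :=
  fun a a' => ∑ j : Fin 3, ∑ k : Fin 3, m a j k * (starRingEnd ℂ) (m a' j k)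

/-- Reduced density matrix of mode B (trace out A and C). -/
noncomputable def rhoB (m : Fin 3 → Fin 3 → Fin 3 → ℂ) : Matrix (Fin 3) (Fin 3) ℂ :=
  fun b b' => ∑ i : Fin 3, ∑ k : Fin 3, m i b k * (starRingEnd ℂ) (m i b' k)

/-- Reduced density matrix of mode C (trace out A and B). -/
noncomputable def rhoC (m : Fin 3 → Fin 3 → Fin 3 → ℂ) : Matrix (Fin 3) (Fin 3) ℂ :=
  fun c c' => ∑ i : Fin 3, ∑ j : Fin 3, m i j c * (starRingEnd ℂ) (m i j c')

/-- The family `S₂(r,θ)`, with `↑ = 0`, `↓ = 1`, empty `= 2`: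
`r(|↑↑0⟩ + |↓0↓⟩ + e^{iθ}|0↓↑⟩) + √(1/3−r²)(|↓↓0⟩ + |↑0↑⟩ + |0↑↓⟩)`. -/
noncomputable def S2 (r θ : ℝ) : Fin 3 → Fin 3 → Fin 3 → ℂ := fun i j k =>
  if (i, j, k) = (0, 0, 2) ∨ (i, j, k) = (1, 2, 1) then (r : ℂ)
  else if (i, j, k) = (2, 1, 0) then (r : ℂ) * Complex.exp (Complex.I * θ)
  else if (i, j, k) = (1, 1, 2) ∨ (i, j, k) = (0, 2, 0) ∨ (i, j, k) = (2, 0, 1) then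
    ((Real.sqrt (1 / 3 - r ^ 2) : ℝ) : ℂ)
  else 0

set_option maxHeartbeats 2000000 in
theorem stmt_11 (r θ : ℝ) (h0 : 0 ≤ r) (h1 : r ≤ (Real.sqrt 3)⁻¹) :
    (∑ i : Fin 3, ∑ j : Fin 3, ∑ k : Fin 3, S2 r θ i j k * (starRingEnd ℂ) (S2 r θ i j k)) = 1 ∧
    rhoA (S2 r θ) = ((3 : ℂ)⁻¹) • (1 : Matrix (Fin 3) (Fin 3) ℂ) ∧
    rhoB (S2 r θ) = ((3 : ℂ)⁻¹) • (1 : Matrix (Fin 3) (Fin 3) ℂ) ∧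
    rhoC (S2 r θ) = ((3 : ℂ)⁻¹) • (1 : Matrix (Fin 3) (Fin 3) ℂ) := by
  have hr2 : r ^ 2 ≤ 1 / 3 := by
    have h3 : (Real.sqrt 3)⁻¹ = Real.sqrt (1/3) := by
      rw [show (1:ℝ)/3 = 3⁻¹ by norm_num, Real.sqrt_inv]
    have h1' : r ≤ Real.sqrt (1/3) := h3 ▸ h1
    have := sq_le_sq' (by linarith [Real.sqrt_nonneg (1/3)]) h1'
    have hsq : Real.sqrt (1/3) ^ 2 = 1/3 := Real.sq_sqrt (by norm_num)
    linarith [hsq ▸ this]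
  have hs : ((Real.sqrt (1/3 - r^2) : ℝ) : ℂ) * ((Real.sqrt (1/3 - r^2) : ℝ) : ℂ)
      = ((1/3 - r^2 : ℝ) : ℂ) := by
    rw [← Complex.ofReal_mul, Real.mul_self_sqrt (by linarith)]
  have he : Complex.exp (Complex.I * θ) * (starRingEnd ℂ) (Complex.exp (Complex.I * θ)) = 1 := by
    rw [← Complex.exp_conj, ← Complex.exp_add]
    simp
  have hr : ((r : ℂ) * Complex.exp (Complex.I * θ)) *
      (starRingEnd ℂ) ((r : ℂ) * Complex.exp (Complex.I * θ)) = (r : ℂ) * (r : ℂ) := by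
    rw [map_mul, Complex.conj_ofReal]
    linear_combination ((r:ℂ) * (r:ℂ)) * he
  push_cast at hs
  refine ⟨?_, ?_, ?_, ?_⟩
  · simp only [Fin.sum_univ_three, S2]
    norm_num [Prod.ext_iff, Fin.ext_iff, hr]
    linear_combination (3:ℂ) * hs + (r:ℂ)^2 * he
  all_goals {
    ext a b
    fin_cases a <;> fin_cases b <;>
      simp only [rhoA, rhoB, rhoC, Fin.sum_univ_three, S2, Matrix.smul_apply, Matrix.one_apply] <;>
      norm_num [Prod.ext_iff, Fin.ext_iff, hr] <;>
      first
        | linear_combination hs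
        | linear_combination hs + (r:ℂ)^2 * he
        | linear_combination (r:ℂ)^2 * he }
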